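/- A decorated reciprocity graph (Ω, f, g, λ) at the prime 2 is Rado up to scaling if and only if it is weakly Rado. -/

import Mathlib

/-!
Statement 10: A decorated reciprocity graph `(Ω, f, g, λ)` at the prime 2 (relative
to a fixed isomorphism `log₂ : 1 + 4ℤ₂ → ℤ₂`) is Rado up to scaling if and only if
it is weakly Rado.

Residues mod `2^n` are encoded as natural numbers `< 2^n`; an element of
`(ℤ/2^n)^×` is a natural number `< 2^n` not divisible by `2`.  The isomorphism
`log₂` is encoded by the function `lg : ℤ₂ → ℤ₂`, `lg x = log₂ (1 + 4x)`.
-/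

noncomputable section

open scoped Classical ENat

/-- `lg` encodes a (topological) group isomorphism `log₂ : 1 + 4ℤ₂ ≃ ℤ₂`
via `lg x = log₂ (1 + 4 x)` (note `(1+4x)(1+4y) = 1 + 4(x + y + 4xy)`). -/
structure IsLogIso2 (lg : ℤ_[2] → ℤ_[2]) : Prop where
  bijective : Function.Bijective lg
  map_mul : ∀ x y : ℤ_[2], lg (x + y + 4 * x * y) = lg x + lg y
  continuous : Continuous lg

/-- The value of `log₂ (1 + a·2^n) mod 2^n`, as a natural number `< 2^n`
(for `n ≥ 2`). -/
def logVal2 (lg : ℤ_[2] → ℤ_[2]) (n : ℕ) (a : ℤ_[2]) : ℕ :=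
  (PadicInt.toZModPow n (lg (a * (2 : ℤ_[2]) ^ (n - 2)))).val

/-- The raw data of a decorated graph at 2: a vertex set `Ω`, the function
`f : Ω → ℤ_{≥1} ∪ {∞}`, the two distinguished vertices `v1 = v₂(1)`,
`v2 = v₂(2)`, the decoration `g` and the labeling `lab`. -/
structure GraphData2 where
  Ω : Type
  f : Ω → ℕ∞
  v1 : Ω
  v2 : Ω
  g : Ω → ℕ
  lab : Ω → Ω → ℕ

namespace GraphData2

variable (D : GraphData2)

/-- `f(v,w) = min (f v) (f w)`, as a natural number. -/
def fm (v w : D.Ω) : ℕ := (min (D.f v) (D.f w)).toNat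

/-- The pairs `(v,w)` carrying a label: distinct, not both in the fiber over `∞`. -/
def Rel (v w : D.Ω) : Prop := v ≠ w ∧ ¬ (D.f v = ⊤ ∧ D.f w = ⊤)

/-- `D` is a decorated graph at the prime 2, for the logarithm `lg`. -/
def IsDecorated (lg : ℤ_[2] → ℤ_[2]) : Prop :=
  Countable D.Ω ∧ Infinite D.Ω ∧
  (∀ v, 1 ≤ D.f v) ∧
  D.v1 ≠ D.v2 ∧ D.f D.v1 = ⊤ ∧ D.f D.v2 = ⊤ ∧
  (∀ v, D.f v = ⊤ → v = D.v1 ∨ v = D.v2) ∧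
  (∀ v, D.f v ≠ ⊤ → D.g v < 2 ^ (D.f v).toNat ∧ ¬ 2 ∣ D.g v) ∧
  (∀ v w, D.Rel v w → D.lab v w < 2 ^ D.fm v w) ∧
  (∀ w, D.f w ≠ ⊤ → (D.lab D.v2 w % 2 = 1 ↔ D.f w = 1)) ∧
  (∀ w, D.f w ≠ ⊤ → 2 ≤ D.f w →
    D.lab D.v1 w = logVal2 lg (D.f w).toNat (D.g w : ℤ_[2])) ∧
  (∀ w, D.f w ≠ ⊤ → D.lab w D.v1 = 0 ∧ D.lab w D.v2 = 0)

/-- `D` is a decorated reciprocity graph: it moreover satisfies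
`λ(v,w) ≡ λ(w,v) + λ(v₂(2),v)·λ(v₂(2),w) (mod 2)` for `v, w ∈ Ω_fin`. -/
def IsRecip (lg : ℤ_[2] → ℤ_[2]) : Prop :=
  D.IsDecorated lg ∧
  ∀ v w, D.f v ≠ ⊤ → D.f w ≠ ⊤ → v ≠ w →
    D.lab v w % 2 = (D.lab w v + D.lab D.v2 v * D.lab D.v2 w) % 2

/-- `D` is Rado. -/
def IsRado (lg : ℤ_[2] → ℤ_[2]) : Prop :=
  ∀ S : Finset D.Ω, D.v1 ∈ S → D.v2 ∈ S →
  ∀ n : ℕ, 1 ≤ n →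
  ∀ α : ℕ, α < 2 ^ n → ¬ 2 ∣ α →
  ∀ μ₁ μ₂ : D.Ω → ℕ,
    (∀ s ∈ S, μ₁ s < 2 ^ (min (n : ℕ∞) (D.f s)).toNat) →
    (∀ s ∈ S, μ₂ s < 2 ^ (min (n : ℕ∞) (D.f s)).toNat) →
    (n = 1 ↔ μ₂ D.v2 % 2 = 1) →
    (2 ≤ n → μ₂ D.v1 = logVal2 lg n (α : ℤ_[2]) ∧ μ₁ D.v1 = 0 ∧ μ₁ D.v2 = 0) →
    (∀ s ∈ S, s ≠ D.v1 → s ≠ D.v2 →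
      μ₁ s % 2 = (μ₂ s + D.lab D.v2 s * μ₂ D.v2) % 2) →
    ∃ v : D.Ω, v ∉ S ∧ D.f v = (n : ℕ∞) ∧ D.g v = α ∧
      ∀ s ∈ S, D.lab v s = μ₁ s ∧ D.lab s v = μ₂ s

/-- `D` is weakly Rado. -/
def IsWeaklyRado (lg : ℤ_[2] → ℤ_[2]) : Prop :=
  ∀ S : Finset D.Ω, D.v1 ∈ S → D.v2 ∈ S →
  ∀ n : ℕ, 1 ≤ n →
  ∀ α : ℕ, α < 2 ^ n → ¬ 2 ∣ α →
  ∀ μ₁ μ₂ : D.Ω → ℕ,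
    (∀ s ∈ S, μ₁ s < 2 ^ (min (n : ℕ∞) (D.f s)).toNat) →
    (∀ s ∈ S, μ₂ s < 2 ^ (min (n : ℕ∞) (D.f s)).toNat) →
    (n = 1 ↔ μ₂ D.v2 % 2 = 1) →
    (2 ≤ n → μ₂ D.v1 = logVal2 lg n (α : ℤ_[2]) ∧ μ₁ D.v1 = 0 ∧ μ₁ D.v2 = 0) →
    (∀ s ∈ S, s ≠ D.v1 → s ≠ D.v2 →
      μ₁ s % 2 = (μ₂ s + D.lab D.v2 s * μ₂ D.v2) % 2) →
    ∃ v : D.Ω, v ∉ S ∧ ∃ γ : ℕ, γ < 2 ^ n ∧ ¬ 2 ∣ γ ∧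
      D.f v = (n : ℕ∞) ∧ D.g v = α ∧
      ∀ s ∈ S, D.lab v s = (γ * μ₁ s) % 2 ^ (min (n : ℕ∞) (D.f s)).toNat ∧
        D.lab s v = μ₂ s

/-- The scaling `γ_• · λ` of the labeling of `D`. -/
def scale (γ : D.Ω → ℕ) : GraphData2 where
  Ω := D.Ω
  f := D.f
  v1 := D.v1
  v2 := D.v2
  g := D.g
  lab := fun v w => if D.f v = ⊤ then D.lab v w else (γ v * D.lab v w) % 2 ^ D.fm v w

/-- `D` is Rado up to scaling: some scaling `γ_• · λ` of its labeling by units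
`γ_v ∈ (ℤ/2^{f v})^×` is Rado. -/
def IsRadoUpToScaling (lg : ℤ_[2] → ℤ_[2]) : Prop :=
  ∃ γ : D.Ω → ℕ, (∀ v, D.f v ≠ ⊤ → γ v < 2 ^ (D.f v).toNat ∧ ¬ 2 ∣ γ v) ∧
    (D.scale γ).IsRado lg

end GraphData2

/-!
If `γ_•·λ` is Rado, a problem `(S, n, α, μ₁, μ₂)` for `λ` becomes one for `γ_•·λ` after
multiplying `μ₂(s)` by `γ_s`; its solution `v` solves the original problem up to the scalar
`γ_v⁻¹`.

Conversely, there are only countably many pairs of an extension problem and a guess `c` for the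
scaling factors on `S`. Answer them one at a time by pairwise distinct vertices, using weak Rado
on `S` enlarged by the vertices already used, with `μ₂(s)` divided by `c_s`, and fix `γ_v` as
the inverse of the weak scalar at the new vertex `v`. Every problem for `γ_•·λ` is then solved
by the answer to its pair with the correct guess `c = γ|_S`.
-/

section Arithmetic

/-- Junk unless `c` is coprime to `k`. -/
def modInv (k c : ℕ) : ℕ := ((c : ZMod k)⁻¹).val

lemma mul_modInv_modEq_one {k c : ℕ} [NeZero k] (hc : c.Coprime k) :
    c * modInv k c ≡ 1 [MOD k] := by
  rw [← ZMod.natCast_eq_natCast_iff, Nat.cast_mul, modInv, ZMod.natCast_zmod_val,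
    Nat.cast_one, ZMod.coe_mul_inv_eq_one c hc]

lemma modInv_lt (k c : ℕ) [NeZero k] : modInv k c < k := ZMod.val_lt _

lemma coprime_two_pow_of_not_two_dvd {c : ℕ} (hc : ¬ 2 ∣ c) (m : ℕ) : c.Coprime (2 ^ m) :=
  (Nat.coprime_comm.mp ((Nat.prime_two.coprime_iff_not_dvd).mpr hc)).pow_right m

lemma not_two_dvd_right_of_mul_modEq_one {a b m : ℕ} (hm : 1 ≤ m)
    (h : a * b ≡ 1 [MOD 2 ^ m]) : ¬ 2 ∣ b := by
  intro hb
  have hodd : a * b % 2 = 1 % 2 := h.of_dvd (dvd_pow_self 2 (by omega))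
  have heven : a * b % 2 = 0 := Nat.mod_eq_zero_of_dvd (hb.mul_left a)
  omega

lemma not_two_dvd_modInv {c m : ℕ} (hc : ¬ 2 ∣ c) (hm : 1 ≤ m) : ¬ 2 ∣ modInv (2 ^ m) c :=
  not_two_dvd_right_of_mul_modEq_one hm
    (mul_modInv_modEq_one (coprime_two_pow_of_not_two_dvd hc m))

lemma mul_mod_mul_mod_of_mul_modEq_one {a b k x : ℕ} (hab : a * b ≡ 1 [MOD k]) (hx : x < k) :
    a * (b * x % k) % k = x :=
  calc a * (b * x % k) % k = a * b * x % k := by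
        rw [Nat.mul_mod, Nat.mod_mod, ← Nat.mul_mod, mul_assoc]
    _ = 1 * x % k := hab.mul_right x
    _ = x := by rw [one_mul, Nat.mod_eq_of_lt hx]

lemma mul_mod_two_pow_mod_two {c m : ℕ} (x : ℕ) (hc : ¬ 2 ∣ c) (hm : 1 ≤ m) :
    c * x % 2 ^ m % 2 = x % 2 := by
  rw [Nat.mod_mod_of_dvd _ (dvd_pow_self 2 (by omega)), Nat.mul_mod]
  simp [Nat.two_dvd_ne_zero.mp hc]

lemma eq_of_mul_mod_two_pow_eq {c m x y : ℕ} (hc : ¬ 2 ∣ c) (hx : x < 2 ^ m) (hy : y < 2 ^ m)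
    (h : c * x % 2 ^ m = c * y % 2 ^ m) : x = y :=
  (Nat.ModEq.cancel_left_of_coprime ((coprime_two_pow_of_not_two_dvd hc m).symm) h).eq_of_lt_of_lt
    hx hy

lemma ENat.one_le_toNat_min_natCast {n : ℕ} {a : ℕ∞} (hn : 1 ≤ n) (ha : 1 ≤ a) :
    1 ≤ (min (n : ℕ∞) a).toNat := by
  have := ENat.toNat_le_toNat (le_min (by exact_mod_cast hn) ha)
    (ne_top_of_le_ne_top (ENat.natCast_ne_top n) (min_le_left _ _))
  simpa using this

lemma ENat.toNat_min_natCast_le (n : ℕ) (a : ℕ∞) : (min (n : ℕ∞) a).toNat ≤ n := by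
  simpa using ENat.toNat_le_toNat (min_le_left (n : ℕ∞) a) (ENat.natCast_ne_top n)

end Arithmetic

section FreshChoice

variable {Q X : Type*} {P : Q → X → Prop}

def greedyUsed (hP : ∀ q (A : Finset X), ∃ x ∉ A, P q x) (e : ℕ → Q) : ℕ → Finset X
  | 0 => ∅
  | k + 1 => insert (hP (e k) (greedyUsed hP e k)).choose (greedyUsed hP e k)

def greedy (hP : ∀ q (A : Finset X), ∃ x ∉ A, P q x) (e : ℕ → Q) (k : ℕ) : X :=
  (hP (e k) (greedyUsed hP e k)).choose

section

variable (hP : ∀ q (A : Finset X), ∃ x ∉ A, P q x) (e : ℕ → Q)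

lemma greedy_spec (k : ℕ) : P (e k) (greedy hP e k) :=
  (hP (e k) (greedyUsed hP e k)).choose_spec.2

lemma greedy_mem_greedyUsed {j k : ℕ} (h : j < k) : greedy hP e j ∈ greedyUsed hP e k := by
  induction k, h using Nat.le_induction with
  | base => exact Finset.mem_insert_self _ _
  | succ k _ ih => exact Finset.mem_insert_of_mem ih

lemma greedy_injective : Function.Injective (greedy hP e) := by
  have fresh (k : ℕ) : greedy hP e k ∉ greedyUsed hP e k :=
    (hP (e k) (greedyUsed hP e k)).choose_spec.1
  intro j k hjk
  by_contra hne
  rcases Nat.lt_or_gt_of_ne hne with h | h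
  · exact fresh k (hjk ▸ greedy_mem_greedyUsed hP e h)
  · exact fresh j (hjk ▸ greedy_mem_greedyUsed hP e h)

end

theorem exists_injective_forall_of_exists_notMem_finset [Countable Q]
    (hP : ∀ q (A : Finset X), ∃ x ∉ A, P q x) :
    ∃ x : Q → X, Function.Injective x ∧ ∀ q, P q (x q) := by
  cases isEmpty_or_nonempty Q with
  | inl _ => exact ⟨isEmptyElim, fun q => isEmptyElim q, fun q => isEmptyElim q⟩
  | inr _ =>
    obtain ⟨e, he⟩ := exists_surjective_nat Q
    refine ⟨greedy hP e ∘ Function.surjInv he,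
      (greedy_injective hP e).comp (Function.injective_surjInv he), fun q => ?_⟩
    simpa only [Function.comp_apply, Function.surjInv_eq he] using
      greedy_spec hP e (Function.surjInv he q)

end FreshChoice

namespace GraphData2

variable (D : GraphData2) (lg : ℤ_[2] → ℤ_[2])

def IsExtensionProblem (S : Finset D.Ω) (n α : ℕ) (μ₁ μ₂ : D.Ω → ℕ) : Prop :=
  D.v1 ∈ S ∧ D.v2 ∈ S ∧ 1 ≤ n ∧ α < 2 ^ n ∧ ¬ 2 ∣ α ∧
  (∀ s ∈ S, μ₁ s < 2 ^ (min (n : ℕ∞) (D.f s)).toNat) ∧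
  (∀ s ∈ S, μ₂ s < 2 ^ (min (n : ℕ∞) (D.f s)).toNat) ∧
  (n = 1 ↔ μ₂ D.v2 % 2 = 1) ∧
  (2 ≤ n → μ₂ D.v1 = logVal2 lg n (α : ℤ_[2]) ∧ μ₁ D.v1 = 0 ∧ μ₁ D.v2 = 0) ∧
  (∀ s ∈ S, s ≠ D.v1 → s ≠ D.v2 → μ₁ s % 2 = (μ₂ s + D.lab D.v2 s * μ₂ D.v2) % 2)

def IsExtension (S : Finset D.Ω) (n α : ℕ) (μ₁ μ₂ : D.Ω → ℕ) (v : D.Ω) : Prop :=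
  v ∉ S ∧ D.f v = n ∧ D.g v = α ∧ ∀ s ∈ S, D.lab v s = μ₁ s ∧ D.lab s v = μ₂ s

theorem isRado_iff : D.IsRado lg ↔ ∀ S n α μ₁ μ₂,
    D.IsExtensionProblem lg S n α μ₁ μ₂ → ∃ v, D.IsExtension S n α μ₁ μ₂ v :=
  ⟨fun h _ _ _ _ _ ⟨h1, h2, h3, h4, h5, h6, h7, h8, h9, h10⟩ =>
    h _ h1 h2 _ h3 _ h4 h5 _ _ h6 h7 h8 h9 h10,
   fun h _ h1 h2 _ h3 _ h4 h5 _ _ h6 h7 h8 h9 h10 =>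
    h _ _ _ _ _ ⟨h1, h2, h3, h4, h5, h6, h7, h8, h9, h10⟩⟩

theorem isWeaklyRado_iff : D.IsWeaklyRado lg ↔ ∀ S n α μ₁ μ₂,
    D.IsExtensionProblem lg S n α μ₁ μ₂ → ∃ v γ, γ < 2 ^ n ∧ ¬ 2 ∣ γ ∧
      D.IsExtension S n α (fun s => γ * μ₁ s % 2 ^ (min (n : ℕ∞) (D.f s)).toNat) μ₂ v := by
  refine ⟨fun h S n α μ₁ μ₂ ⟨h1, h2, h3, h4, h5, h6, h7, h8, h9, h10⟩ => ?_,
    fun h S h1 h2 n h3 α h4 h5 μ₁ μ₂ h6 h7 h8 h9 h10 => ?_⟩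
  · obtain ⟨v, hvS, γ, hγ, hγ', hf, hg, hlab⟩ := h S h1 h2 n h3 α h4 h5 μ₁ μ₂ h6 h7 h8 h9 h10
    exact ⟨v, γ, hγ, hγ', hvS, hf, hg, hlab⟩
  · obtain ⟨v, γ, hγ, hγ', hvS, hf, hg, hlab⟩ :=
      h S n α μ₁ μ₂ ⟨h1, h2, h3, h4, h5, h6, h7, h8, h9, h10⟩
    exact ⟨v, hvS, γ, hγ, hγ', hf, hg, hlab⟩

variable {D lg}

theorem IsExtensionProblem.congr {S : Finset D.Ω} {n α : ℕ} {μ₁ μ₂ μ₁' μ₂' : D.Ω → ℕ}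
    (h : D.IsExtensionProblem lg S n α μ₁ μ₂) (h₁ : Set.EqOn μ₁ μ₁' S)
    (h₂ : Set.EqOn μ₂ μ₂' S) : D.IsExtensionProblem lg S n α μ₁' μ₂' := by
  obtain ⟨hv1, hv2, hn, hα, hα', hb₁, hb₂, hn1, hlog, hpar⟩ := h
  refine ⟨hv1, hv2, hn, hα, hα', fun s hs => h₁ hs ▸ hb₁ s hs, fun s hs => h₂ hs ▸ hb₂ s hs,
    h₂ hv2 ▸ hn1, ?_, fun s hs hs1 hs2 => ?_⟩
  · rw [← h₂ hv1, ← h₁ hv1, ← h₁ hv2]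
    exact hlog
  · rw [← h₁ hs, ← h₂ hs, ← h₂ hv2]
    exact hpar s hs hs1 hs2

theorem IsExtension.restrict {S T : Finset D.Ω} {n α : ℕ} {μ₁ μ₂ μ₁' μ₂' : D.Ω → ℕ} {v : D.Ω}
    (h : D.IsExtension T n α μ₁ μ₂ v) (hST : S ⊆ T) (h₁ : Set.EqOn μ₁ μ₁' S)
    (h₂ : Set.EqOn μ₂ μ₂' S) : D.IsExtension S n α μ₁' μ₂' v := by
  obtain ⟨hvT, hf, hg, hlab⟩ := h
  exact ⟨fun hvS => hvT (hST hvS), hf, hg, fun s hs => ⟨h₁ hs ▸ (hlab s (hST hs)).1,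
    h₂ hs ▸ (hlab s (hST hs)).2⟩⟩

/-- The labels on `A \ S` are dummies chosen to satisfy the parity constraint. -/
theorem IsExtensionProblem.union (hf : ∀ v, 1 ≤ D.f v) {S : Finset D.Ω} {n α : ℕ}
    {μ₁ μ₂ : D.Ω → ℕ} (h : D.IsExtensionProblem lg S n α μ₁ μ₂) (A : Finset D.Ω) :
    D.IsExtensionProblem lg (S ∪ A) n α
      (fun s => if s ∈ S then μ₁ s else D.lab D.v2 s * μ₂ D.v2 % 2)
      (fun s => if s ∈ S then μ₂ s else 0) := by
  obtain ⟨hv1, hv2, hn, hα, hα', hb₁, hb₂, hn1, hlog, hpar⟩ := h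
  have hlevel (s : D.Ω) : 2 ≤ 2 ^ (min (n : ℕ∞) (D.f s)).toNat :=
    Nat.le_self_pow (Nat.one_le_iff_ne_zero.mp (ENat.one_le_toNat_min_natCast hn (hf s))) 2
  refine ⟨Finset.mem_union_left _ hv1, Finset.mem_union_left _ hv2, hn, hα, hα',
    fun s _ => ?_, fun s _ => ?_, by simpa [hv2] using hn1, by simpa [hv1, hv2] using hlog,
    fun s _ hs1 hs2 => ?_⟩
  · dsimp only
    split_ifs with hs
    · exact hb₁ s hs
    · exact (Nat.mod_lt _ two_pos).trans_le (hlevel s)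
  · dsimp only
    split_ifs with hs
    · exact hb₂ s hs
    · exact pow_pos two_pos _
  · dsimp only
    split_ifs with hs
    · simpa [hv2] using hpar s hs hs1 hs2
    · simp

theorem IsWeaklyRado.exists_notMem (hf : ∀ v, 1 ≤ D.f v) (hW : D.IsWeaklyRado lg)
    {S : Finset D.Ω} {n α : ℕ} {μ₁ μ₂ : D.Ω → ℕ} (h : D.IsExtensionProblem lg S n α μ₁ μ₂)
    (A : Finset D.Ω) : ∃ v ∉ A, ∃ γ, γ < 2 ^ n ∧ ¬ 2 ∣ γ ∧
      D.IsExtension S n α (fun s => γ * μ₁ s % 2 ^ (min (n : ℕ∞) (D.f s)).toNat) μ₂ v := by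
  obtain ⟨v, γ, hγ, hγ', hext⟩ := (D.isWeaklyRado_iff lg).mp hW _ _ _ _ _ (h.union hf A)
  refine ⟨v, fun hvA => hext.1 (Finset.mem_union_right _ hvA), γ, hγ, hγ',
    hext.restrict Finset.subset_union_left (fun s hs => ?_) (fun s hs => ?_)⟩ <;>
  simp [Finset.mem_coe.mp hs]

variable (D) in
/-- The action of `scale c` on the labels `λ(s, v)` of a new vertex `v` of level `n`. -/
def scaleFamily (n : ℕ) (c μ : D.Ω → ℕ) (s : D.Ω) : ℕ :=
  if D.f s = ⊤ then μ s else c s * μ s % 2 ^ (min (n : ℕ∞) (D.f s)).toNat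

theorem scale_lab (γ : D.Ω → ℕ) (v w : D.Ω) :
    (D.scale γ).lab v w = if D.f v = ⊤ then D.lab v w else γ v * D.lab v w % 2 ^ D.fm v w :=
  rfl

theorem fm_eq_of_f_eq {v : D.Ω} {n : ℕ} (h : D.f v = n) (s : D.Ω) :
    D.fm v s = (min (n : ℕ∞) (D.f s)).toNat := by
  rw [fm, h]

theorem fm_comm (v w : D.Ω) : D.fm v w = D.fm w v := by
  rw [fm, fm, min_comm]

theorem isExtensionProblem_scale_iff (hv2 : D.f D.v2 = ⊤) (γ : D.Ω → ℕ) {S : Finset D.Ω}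
    {n α : ℕ} {μ₁ μ₂ : D.Ω → ℕ} :
    (D.scale γ).IsExtensionProblem lg S n α μ₁ μ₂ ↔ D.IsExtensionProblem lg S n α μ₁ μ₂ := by
  have hlab : (D.scale γ).lab (D.scale γ).v2 = D.lab D.v2 := funext fun _ => if_pos hv2
  simp only [IsExtensionProblem, hlab]
  rfl

theorem IsExtensionProblem.scaleFamily (hv1 : D.f D.v1 = ⊤) (hv2 : D.f D.v2 = ⊤)
    (hf : ∀ v, 1 ≤ D.f v) {S : Finset D.Ω} {n α : ℕ} {μ₁ μ₂ c : D.Ω → ℕ}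
    (hc : ∀ s ∈ S, D.f s ≠ ⊤ → ¬ 2 ∣ c s) (h : D.IsExtensionProblem lg S n α μ₁ μ₂) :
    D.IsExtensionProblem lg S n α μ₁ (D.scaleFamily n c μ₂) := by
  obtain ⟨hS1, hS2, hn, hα, hα', hb₁, hb₂, hn1, hlog, hpar⟩ := h
  have h_v1 : D.scaleFamily n c μ₂ D.v1 = μ₂ D.v1 := if_pos hv1
  have h_v2 : D.scaleFamily n c μ₂ D.v2 = μ₂ D.v2 := if_pos hv2
  refine ⟨hS1, hS2, hn, hα, hα', hb₁, fun s hs => ?_, by rwa [h_v2], by rwa [h_v1],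
    fun s hs hs1 hs2 => ?_⟩
  · unfold GraphData2.scaleFamily
    split_ifs
    exacts [hb₂ s hs, Nat.mod_lt _ (pow_pos two_pos _)]
  · have hmod : D.scaleFamily n c μ₂ s % 2 = μ₂ s % 2 := by
      unfold GraphData2.scaleFamily
      split_ifs with hs'
      · rfl
      · exact mul_mod_two_pow_mod_two _ (hc s hs hs') (ENat.one_le_toNat_min_natCast hn (hf s))
    rw [h_v2, Nat.add_mod, hmod, ← Nat.add_mod]
    exact hpar s hs hs1 hs2

theorem IsExtension.of_scale (hlab : ∀ v w, D.Rel v w → D.lab v w < 2 ^ D.fm v w)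
    {γ μ₁ μ₂ : D.Ω → ℕ} {S : Finset D.Ω} {n α δ : ℕ} {v : D.Ω}
    (hγ : ∀ s ∈ S, D.f s ≠ ⊤ → ¬ 2 ∣ γ s) (hδ : γ v * δ ≡ 1 [MOD 2 ^ n])
    (hμ₂ : ∀ s ∈ S, μ₂ s < 2 ^ (min (n : ℕ∞) (D.f s)).toNat)
    (h : (D.scale γ).IsExtension S n α μ₁ (D.scaleFamily n γ μ₂) v) :
    D.IsExtension S n α (fun s => δ * μ₁ s % 2 ^ (min (n : ℕ∞) (D.f s)).toNat) μ₂ v := by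
  obtain ⟨hvS, hfv, hgv, hext⟩ := h
  have hfv : D.f v = n := hfv
  have hv : D.f v ≠ ⊤ := hfv ▸ ENat.natCast_ne_top n
  refine ⟨hvS, hfv, hgv, fun s hs => ⟨?_, ?_⟩⟩
  · have hvs : D.Rel v s := ⟨fun h => hvS (h ▸ hs), fun h => hv h.1⟩
    have h₁ := (hext s hs).1
    have hlt := hlab v s hvs
    rw [scale_lab, if_neg hv, fm_eq_of_f_eq hfv] at h₁
    rw [fm_eq_of_f_eq hfv] at hlt
    have hδ' : δ * γ v ≡ 1 [MOD 2 ^ (min (n : ℕ∞) (D.f s)).toNat] :=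
      (mul_comm δ (γ v) ▸ hδ).of_dvd (pow_dvd_pow 2 (ENat.toNat_min_natCast_le n _))
    simp only [← h₁, mul_mod_mul_mod_of_mul_modEq_one hδ' hlt]
  · have h₂ := (hext s hs).2
    rw [scale_lab, GraphData2.scaleFamily] at h₂
    split_ifs at h₂ with hs'
    · exact h₂
    · have hsv : D.Rel s v := ⟨fun h => hvS (h ▸ hs), fun h => hs' h.1⟩
      have hlt := hlab s v hsv
      rw [fm_comm, fm_eq_of_f_eq hfv] at h₂ hlt
      exact eq_of_mul_mod_two_pow_eq (hγ s hs hs') hlt (hμ₂ s hs) h₂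

theorem IsExtension.scale {γ c μ₁ μ₂ : D.Ω → ℕ} {S : Finset D.Ω} {n α u : ℕ} {v : D.Ω}
    (hu : γ v * u ≡ 1 [MOD 2 ^ n]) (hc : ∀ s ∈ S, D.f s ≠ ⊤ → γ s * c s ≡ 1 [MOD 2 ^ n])
    (hμ₁ : ∀ s ∈ S, μ₁ s < 2 ^ (min (n : ℕ∞) (D.f s)).toNat)
    (hμ₂ : ∀ s ∈ S, μ₂ s < 2 ^ (min (n : ℕ∞) (D.f s)).toNat)
    (h : D.IsExtension S n α (fun s => u * μ₁ s % 2 ^ (min (n : ℕ∞) (D.f s)).toNat)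
      (D.scaleFamily n c μ₂) v) :
    (D.scale γ).IsExtension S n α μ₁ μ₂ v := by
  obtain ⟨hvS, hfv, hgv, hext⟩ := h
  have hv : D.f v ≠ ⊤ := hfv ▸ ENat.natCast_ne_top n
  have hdvd (s : D.Ω) : 2 ^ (min (n : ℕ∞) (D.f s)).toNat ∣ 2 ^ n :=
    pow_dvd_pow 2 (ENat.toNat_min_natCast_le n _)
  refine ⟨hvS, hfv, hgv, fun (s : D.Ω) hs => ⟨?_, ?_⟩⟩
  · rw [scale_lab, if_neg hv, (hext s hs).1, fm_eq_of_f_eq hfv]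
    exact mul_mod_mul_mod_of_mul_modEq_one (hu.of_dvd (hdvd s)) (hμ₁ s hs)
  · rw [scale_lab, (hext s hs).2, GraphData2.scaleFamily]
    split_ifs with hs'
    · rfl
    · rw [fm_comm, fm_eq_of_f_eq hfv]
      exact mul_mod_mul_mod_of_mul_modEq_one ((hc s hs hs').of_dvd (hdvd s)) (hμ₂ s hs)

theorem IsRadoUpToScaling.isWeaklyRado (hv1 : D.f D.v1 = ⊤) (hv2 : D.f D.v2 = ⊤)
    (hf : ∀ v, 1 ≤ D.f v) (hlab : ∀ v w, D.Rel v w → D.lab v w < 2 ^ D.fm v w)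
    (h : D.IsRadoUpToScaling lg) : D.IsWeaklyRado lg := by
  obtain ⟨γ, hγ, hR⟩ := h
  refine (D.isWeaklyRado_iff lg).mpr fun S n α μ₁ μ₂ hprob => ?_
  have hγ_odd (s : D.Ω) (_ : s ∈ S) (hs : D.f s ≠ ⊤) : ¬ 2 ∣ γ s := (hγ s hs).2
  obtain ⟨v, hv⟩ := (D.scale γ).isRado_iff lg |>.mp hR S n α μ₁ (D.scaleFamily n γ μ₂)
    ((isExtensionProblem_scale_iff hv2 γ).mpr (hprob.scaleFamily hv1 hv2 hf hγ_odd))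
  have hfv : D.f v = n := hv.2.1
  have hγv : ¬ 2 ∣ γ v := (hγ v (hfv ▸ ENat.natCast_ne_top n)).2
  have : NeZero (2 ^ n) := ⟨pow_ne_zero n two_ne_zero⟩
  exact ⟨v, modInv (2 ^ n) (γ v), modInv_lt _ _, not_two_dvd_modInv hγv hprob.2.2.1,
    hv.of_scale hlab hγ_odd (mul_modInv_modEq_one (coprime_two_pow_of_not_two_dvd hγv n))
      hprob.2.2.2.2.2.2.1⟩

variable (D lg) in
/-- An extension problem `(S, n, α, μ₁, μ₂)` together with a guess `c` for the scaling factors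
on `S`; finitely supported functions keep these countable. -/
abbrev ScalingQuery : Type :=
  {q : Finset D.Ω × ℕ × ℕ × (D.Ω →₀ ℕ) × (D.Ω →₀ ℕ) × (D.Ω →₀ ℕ) //
    D.IsExtensionProblem lg q.1 q.2.1 q.2.2.1 q.2.2.2.1 q.2.2.2.2.1 ∧
      ∀ s ∈ q.1, D.f s ≠ ⊤ → ¬ 2 ∣ q.2.2.2.2.2 s}

def ScalingQuery.IsAnswer : D.ScalingQuery lg → ℕ → D.Ω → Prop
  | ⟨⟨S, n, α, μ₁, μ₂, c⟩, _⟩, u, v => ¬ 2 ∣ u ∧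
    D.IsExtension S n α (fun s => u * μ₁ s % 2 ^ (min (n : ℕ∞) (D.f s)).toNat)
      (D.scaleFamily n (fun s => modInv (2 ^ n) (c s)) μ₂) v

theorem IsWeaklyRado.exists_injective_isAnswer [Countable D.Ω] (hv1 : D.f D.v1 = ⊤)
    (hv2 : D.f D.v2 = ⊤) (hf : ∀ v, 1 ≤ D.f v) (hW : D.IsWeaklyRado lg) :
    ∃ (x : D.ScalingQuery lg → D.Ω) (u : D.ScalingQuery lg → ℕ),
      Function.Injective x ∧ ∀ q : D.ScalingQuery lg, q.IsAnswer (u q) (x q) := by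
  obtain ⟨x, hx_inj, hx⟩ := exists_injective_forall_of_exists_notMem_finset
    (P := fun q v => ∃ u, ScalingQuery.IsAnswer q u v) <| by
      rintro ⟨⟨S, n, α, μ₁, μ₂, c⟩, hprob, hc⟩ A
      obtain ⟨v, hvA, u, -, hu, hext⟩ := hW.exists_notMem hf (hprob.scaleFamily hv1 hv2 hf
        fun s hs hs' => not_two_dvd_modInv (hc s hs hs') hprob.2.2.1) A
      exact ⟨v, hvA, u, hu, hext⟩
  choose u hu using hx
  exact ⟨x, u, hx_inj, hu⟩

variable (lg) in
def answerScaling (x : D.ScalingQuery lg → D.Ω) (u : D.ScalingQuery lg → ℕ) : D.Ω → ℕ :=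
  Function.extend x (fun q => modInv (2 ^ q.1.2.1) (u q)) 1

theorem answerScaling_apply {x : D.ScalingQuery lg → D.Ω} (hx : Function.Injective x)
    (u : D.ScalingQuery lg → ℕ) (q : D.ScalingQuery lg) :
    answerScaling lg x u (x q) = modInv (2 ^ q.1.2.1) (u q) :=
  hx.extend_apply _ _ _

theorem answerScaling_isUnit (hf : ∀ v, 1 ≤ D.f v) {x : D.ScalingQuery lg → D.Ω}
    {u : D.ScalingQuery lg → ℕ} (hx : Function.Injective x)
    (hu : ∀ q : D.ScalingQuery lg, q.IsAnswer (u q) (x q)) (v : D.Ω) (hv : D.f v ≠ ⊤) :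
    answerScaling lg x u v < 2 ^ (D.f v).toNat ∧ ¬ 2 ∣ answerScaling lg x u v := by
  by_cases hvx : ∃ q, x q = v
  · obtain ⟨q, rfl⟩ := hvx
    obtain ⟨⟨S, n, α, μ₁, μ₂, c⟩, hprob, -⟩ := q
    have : NeZero (2 ^ n) := ⟨pow_ne_zero n two_ne_zero⟩
    rw [(hu _).2.2.1, ENat.toNat_natCast, answerScaling_apply hx]
    exact ⟨modInv_lt _ _, not_two_dvd_modInv (hu _).1 hprob.2.2.1⟩
  · rw [answerScaling, Function.extend_apply' _ _ _ hvx]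
    refine ⟨Nat.one_lt_two_pow ?_, by norm_num⟩
    simp [ENat.toNat_eq_zero, hv, Order.one_le_iff_ne_zero.mp (hf v)]

theorem isRadoUpToScaling_of_injective_isAnswer (hv2 : D.f D.v2 = ⊤) (hf : ∀ v, 1 ≤ D.f v)
    {x : D.ScalingQuery lg → D.Ω} {u : D.ScalingQuery lg → ℕ} (hx : Function.Injective x)
    (hu : ∀ q : D.ScalingQuery lg, q.IsAnswer (u q) (x q)) : D.IsRadoUpToScaling lg := by
  set γ := answerScaling lg x u with hγ_def
  have hγ := answerScaling_isUnit hf hx hu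
  refine ⟨γ, hγ, (D.scale γ).isRado_iff lg |>.mpr
    fun (S : Finset D.Ω) n α (μ₁ μ₂ : D.Ω → ℕ) hprob => ?_⟩
  rw [isExtensionProblem_scale_iff hv2] at hprob
  have hγ_odd (s : D.Ω) (_ : s ∈ S) (hs : D.f s ≠ ⊤) : ¬ 2 ∣ γ s := (hγ s hs).2
  have : NeZero (2 ^ n) := ⟨pow_ne_zero n two_ne_zero⟩
  have e₁ : Set.EqOn μ₁ (Finsupp.indicator S fun s _ => μ₁ s) S :=
    fun s hs => (Finsupp.indicator_of_mem hs fun s _ => μ₁ s).symm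
  have e₂ : Set.EqOn μ₂ (Finsupp.indicator S fun s _ => μ₂ s) S :=
    fun s hs => (Finsupp.indicator_of_mem hs fun s _ => μ₂ s).symm
  have e_γ : Set.EqOn γ (Finsupp.indicator S fun s _ => γ s) S :=
    fun s hs => (Finsupp.indicator_of_mem hs fun s _ => γ s).symm
  let q : D.ScalingQuery lg := ⟨(S, n, α, Finsupp.indicator S fun s _ => μ₁ s,
    Finsupp.indicator S fun s _ => μ₂ s, Finsupp.indicator S fun s _ => γ s),
    hprob.congr e₁ e₂, fun s hs hs' => e_γ hs ▸ hγ_odd s hs hs'⟩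
  refine ⟨x q, IsExtension.scale (u := u q) (c := fun s => modInv (2 ^ n) (γ s)) ?_
    (fun s hs hs' => mul_modInv_modEq_one (coprime_two_pow_of_not_two_dvd (hγ_odd s hs hs') n))
    hprob.2.2.2.2.2.1 hprob.2.2.2.2.2.2.1 ((hu q).2.restrict subset_rfl ?_ ?_)⟩
  · rw [hγ_def, answerScaling_apply hx, mul_comm]
    exact mul_modInv_modEq_one (coprime_two_pow_of_not_two_dvd (hu q).1 n)
  · intro s hs
    simp only [q, ← e₁ hs]
  · intro s hs
    simp only [GraphData2.scaleFamily, ← e_γ hs, ← e₂ hs]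

end GraphData2

theorem statement10_general (lg : ℤ_[2] → ℤ_[2])
    (D : GraphData2) (hD : D.IsRecip lg) :
    D.IsRadoUpToScaling lg ↔ D.IsWeaklyRado lg := by
  obtain ⟨⟨hcount, -, hf, -, hv1, hv2, -, -, hlab, -⟩, -⟩ := hD
  refine ⟨GraphData2.IsRadoUpToScaling.isWeaklyRado hv1 hv2 hf hlab, fun hW => ?_⟩
  obtain ⟨x, u, hx, hu⟩ := hW.exists_injective_isAnswer hv1 hv2 hf
  exact GraphData2.isRadoUpToScaling_of_injective_isAnswer hv2 hf hx hu

theorem statement10 (lg : ℤ_[2] → ℤ_[2]) (hlg : IsLogIso2 lg)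
    (D : GraphData2) (hD : D.IsRecip lg) :
    D.IsRadoUpToScaling lg ↔ D.IsWeaklyRado lg :=
  statement10_general lg D hD
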